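/- For every r ∈ (0, ∞) with r ∉ {R₁, R₂}, the following differential inequality holds: f'(r) κ(r) r + 2 σ² f''(r) ≤ −2 α M f'(r) − (ξ σ²/2)·𝟙(r < R₁) − (β σ²/2) f(r)·𝟙(r < R₂), where f' and f'' denote the first and second derivatives of f (which exist at all such r). -/

import Mathlib

/-!
On `(0, R₂)` we have `f' = φ g`, and `φ' = -h' φ` with `2σ² h'(r) = r κ(r) + 2αM`, so the drift
terms cancel: `2σ² f'' + (r κ + 2αM) f' = 2σ² φ g' = -(ξσ²/2) 𝟙(r < R₁) - (βσ²/2) Φ`.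
Since `ξ, β ≥ 0`, we get `g ≤ 1`, hence `f ≤ Φ` on `[0, R₂]`, which gives the inequality.
Beyond `R₂` the function `f` is constant.
-/

open MeasureTheory intervalIntegral Set Filter Topology

section Primitive

variable {u : ℝ → ℝ} {x R : ℝ}

theorem intervalIntegrable_zero_of_continuousOn_Ioi (hu : ContinuousOn u (Ioi 0))
    (h₁ : IntervalIntegrable u volume 0 1) (hx : 0 ≤ x) : IntervalIntegrable u volume 0 x := by
  rcases le_total x 1 with hx₁ | hx₁
  · refine h₁.mono_set ?_
    rw [uIcc_of_le hx, uIcc_of_le zero_le_one]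
    exact Icc_subset_Icc le_rfl hx₁
  · refine h₁.trans (ContinuousOn.intervalIntegrable (hu.mono fun s hs => ?_))
    rw [uIcc_of_le hx₁] at hs
    exact zero_lt_one.trans_le hs.1

theorem ContinuousOn.intervalIntegrable_zero_of_Ici (hu : ContinuousOn u (Ici 0)) (hx : 0 ≤ x) :
    IntervalIntegrable u volume 0 x :=
  (hu.mono Icc_subset_Ici_self).intervalIntegrable_of_Icc hx

theorem continuousOn_Ici_primitive (hu : ∀ x, 0 ≤ x → IntervalIntegrable u volume 0 x) :
    ContinuousOn (fun x => ∫ s in (0:ℝ)..x, u s) (Ici 0) := by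
  intro x hx
  have hx₁ : 0 ≤ x + 1 := by linarith [mem_Ici.1 hx]
  have hcont := continuousOn_primitive_interval' (hu _ hx₁) left_mem_uIcc
  rw [uIcc_of_le hx₁] at hcont
  exact (hcont x ⟨hx, by linarith⟩).mono_of_mem_nhdsWithin <| mem_of_superset
    (inter_mem_nhdsWithin _ (Iio_mem_nhds (lt_add_one x))) fun s hs => ⟨hs.1, hs.2.le⟩

theorem continuousOn_Ici_primitive_min (hu : ContinuousOn u (Ici 0)) (hR : 0 ≤ R) :
    ContinuousOn (fun x => ∫ s in (0:ℝ)..min x R, u s) (Ici 0) :=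
  (continuousOn_Ici_primitive fun _ => hu.intervalIntegrable_zero_of_Ici).comp
    (continuous_id.min continuous_const).continuousOn fun _ hx => le_min hx hR

theorem hasDerivAt_primitive_of_pos (hu : ContinuousOn u (Ioi 0))
    (hint : IntervalIntegrable u volume 0 x) (hx : 0 < x) :
    HasDerivAt (fun t => ∫ s in (0:ℝ)..t, u s) (u x) x :=
  integral_hasDerivAt_right hint (hu.stronglyMeasurableAtFilter isOpen_Ioi x hx)
    (hu.continuousAt (Ioi_mem_nhds hx))

theorem hasDerivAt_primitive_min (hu : ContinuousOn u (Ici 0)) (hx : 0 < x) (hxR : x ≠ R) :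
    HasDerivAt (fun t => ∫ s in (0:ℝ)..min t R, u s) (if x < R then u x else 0) x := by
  rcases hxR.lt_or_gt with hlt | hgt
  · rw [if_pos hlt]
    refine (hasDerivAt_primitive_of_pos (hu.mono Ioi_subset_Ici_self)
      (hu.intervalIntegrable_zero_of_Ici hx.le) hx).congr_of_eventuallyEq ?_
    filter_upwards [Iio_mem_nhds hlt] with t ht
    rw [min_eq_left ht.le]
  · rw [if_neg hgt.not_gt]
    refine (hasDerivAt_const x (∫ s in (0:ℝ)..R, u s)).congr_of_eventuallyEq ?_
    filter_upwards [Ioi_mem_nhds hgt] with t ht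
    rw [min_eq_right ht.le]

end Primitive

theorem HasDerivAt.ite_lt {v : ℝ → ℝ} {v' x R : ℝ} (hv : HasDerivAt v v' x) (hxR : x ≠ R) :
    HasDerivAt (fun t => if t < R then v t else 0) (if x < R then v' else 0) x := by
  rcases hxR.lt_or_gt with hlt | hgt
  · rw [if_pos hlt]
    refine hv.congr_of_eventuallyEq ?_
    filter_upwards [Iio_mem_nhds hlt] with t ht
    exact if_pos ht
  · rw [if_neg hgt.not_gt]
    refine (hasDerivAt_const x 0).congr_of_eventuallyEq ?_
    filter_upwards [Ioi_mem_nhds hgt] with t ht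
    exact if_neg ht.not_gt

section Phi

variable {σ α M : ℝ} {κ h φ : ℝ → ℝ}

theorem continuousOn_φ (hκ_cont : ContinuousOn κ (Ioi 0))
    (hκ_int : IntervalIntegrable (fun s => s * κ s) volume 0 1)
    (hh : ∀ r, h r = (σ ^ 2)⁻¹ * ((1 / 2) * (∫ s in (0:ℝ)..r, s * κ s) + α * M * r))
    (hφ : ∀ r, φ r = Real.exp (-h r)) : ContinuousOn φ (Ici 0) := by
  have hF : ContinuousOn (fun r => ∫ s in (0:ℝ)..r, s * κ s) (Ici 0) :=
    continuousOn_Ici_primitive fun _ =>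
      intervalIntegrable_zero_of_continuousOn_Ioi (continuousOn_id.mul hκ_cont) hκ_int
  have hh_cont : ContinuousOn h (Ici 0) :=
    (continuousOn_const.mul ((continuousOn_const.mul hF).add
      (continuousOn_const.mul continuousOn_id))).congr fun r _ => hh r
  exact hh_cont.neg.rexp.congr fun r _ => hφ r

theorem hasDerivAt_φ (hκ_cont : ContinuousOn κ (Ioi 0))
    (hκ_int : IntervalIntegrable (fun s => s * κ s) volume 0 1)
    (hh : ∀ r, h r = (σ ^ 2)⁻¹ * ((1 / 2) * (∫ s in (0:ℝ)..r, s * κ s) + α * M * r))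
    (hφ : ∀ r, φ r = Real.exp (-h r)) {r : ℝ} (hr : 0 < r) :
    HasDerivAt φ (-((σ ^ 2)⁻¹ * ((1 / 2) * (r * κ r) + α * M)) * φ r) r := by
  have hF := hasDerivAt_primitive_of_pos (continuousOn_id.mul hκ_cont)
    (intervalIntegrable_zero_of_continuousOn_Ioi (continuousOn_id.mul hκ_cont) hκ_int hr.le) hr
  have hh' : HasDerivAt h ((σ ^ 2)⁻¹ * ((1 / 2) * (r * κ r) + α * M * 1)) r :=
    (((hF.const_mul _).add ((hasDerivAt_id r).const_mul _)).const_mul _).congr_of_eventuallyEq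
      (.of_forall hh)
  have hφ' := hh'.fun_neg.exp.congr_of_eventuallyEq (.of_forall hφ)
  rw [← hφ r] at hφ'
  exact hφ'.congr_deriv (by ring)

end Phi

section Profile

variable {φ Φ g f : ℝ → ℝ} {ξ β R₁ R₂ : ℝ}

theorem Φ_nonneg (hφ_pos : ∀ s, 0 < φ s) (hΦ : ∀ r, Φ r = ∫ s in (0:ℝ)..r, φ s) {r : ℝ}
    (hr : 0 ≤ r) : 0 ≤ Φ r :=
  (hΦ r).symm ▸ integral_nonneg hr fun s _ => (hφ_pos s).le

theorem continuousOn_Φ_div_φ (hφ_pos : ∀ s, 0 < φ s) (hφ_cont : ContinuousOn φ (Ici 0))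
    (hΦ : ∀ r, Φ r = ∫ s in (0:ℝ)..r, φ s) : ContinuousOn (fun s => Φ s / φ s) (Ici 0) :=
  ((continuousOn_Ici_primitive fun _ => hφ_cont.intervalIntegrable_zero_of_Ici).congr
    fun r _ => hΦ r).div hφ_cont fun s _ => (hφ_pos s).ne'

theorem continuousOn_g (hφ_pos : ∀ s, 0 < φ s) (hφ_cont : ContinuousOn φ (Ici 0))
    (hΦ : ∀ r, Φ r = ∫ s in (0:ℝ)..r, φ s) (hR₁ : 0 ≤ R₁) (hR₂ : 0 ≤ R₂)
    (hg : ∀ r, g r = 1 - (ξ / 4) * (∫ s in (0:ℝ)..(min r R₁), (φ s)⁻¹)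
      - (β / 4) * (∫ s in (0:ℝ)..(min r R₂), Φ s / φ s)) :
    ContinuousOn g (Ici 0) :=
  ((continuousOn_const.sub (continuousOn_const.mul (continuousOn_Ici_primitive_min
    (hφ_cont.inv₀ fun s _ => (hφ_pos s).ne') hR₁))).sub (continuousOn_const.mul
    (continuousOn_Ici_primitive_min (continuousOn_Φ_div_φ hφ_pos hφ_cont hΦ) hR₂))).congr
    fun r _ => hg r

theorem g_le_one (hφ_pos : ∀ s, 0 < φ s) (hΦ : ∀ r, Φ r = ∫ s in (0:ℝ)..r, φ s)
    (hξ : 0 ≤ ξ) (hβ : 0 ≤ β) (hR₁ : 0 ≤ R₁) (hR₂ : 0 ≤ R₂)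
    (hg : ∀ r, g r = 1 - (ξ / 4) * (∫ s in (0:ℝ)..(min r R₁), (φ s)⁻¹)
      - (β / 4) * (∫ s in (0:ℝ)..(min r R₂), Φ s / φ s)) {r : ℝ} (hr : 0 ≤ r) :
    g r ≤ 1 := by
  have hA : 0 ≤ ∫ s in (0:ℝ)..min r R₁, (φ s)⁻¹ :=
    integral_nonneg (le_min hr hR₁) fun s _ => (inv_pos.2 (hφ_pos s)).le
  have hB : 0 ≤ ∫ s in (0:ℝ)..min r R₂, Φ s / φ s :=
    integral_nonneg (le_min hr hR₂) fun s hs => div_nonneg (Φ_nonneg hφ_pos hΦ hs.1) (hφ_pos s).le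
  rw [hg]
  nlinarith [mul_nonneg hξ hA, mul_nonneg hβ hB]

theorem hasDerivAt_g (hφ_pos : ∀ s, 0 < φ s) (hφ_cont : ContinuousOn φ (Ici 0))
    (hΦ : ∀ r, Φ r = ∫ s in (0:ℝ)..r, φ s)
    (hg : ∀ r, g r = 1 - (ξ / 4) * (∫ s in (0:ℝ)..(min r R₁), (φ s)⁻¹)
      - (β / 4) * (∫ s in (0:ℝ)..(min r R₂), Φ s / φ s))
    {r : ℝ} (hr : 0 < r) (hr₁ : r ≠ R₁) (hr₂ : r ≠ R₂) :
    HasDerivAt g (-(ξ / 4) * (if r < R₁ then (φ r)⁻¹ else 0)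
      - (β / 4) * (if r < R₂ then Φ r / φ r else 0)) r := by
  have hA := hasDerivAt_primitive_min (u := fun s => (φ s)⁻¹)
    (hφ_cont.inv₀ fun s _ => (hφ_pos s).ne') hr hr₁
  have hB := hasDerivAt_primitive_min (continuousOn_Φ_div_φ hφ_pos hφ_cont hΦ) hr hr₂
  exact ((((hA.const_mul (ξ / 4)).const_sub 1).sub (hB.const_mul (β / 4))).congr_of_eventuallyEq
    (.of_forall hg)).congr_deriv (by ring)

theorem f_le_Φ (hφ_pos : ∀ s, 0 < φ s) (hφ_cont : ContinuousOn φ (Ici 0))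
    (hg_cont : ContinuousOn g (Ici 0)) (hg_le : ∀ {s}, 0 ≤ s → g s ≤ 1)
    (hΦ : ∀ r, Φ r = ∫ s in (0:ℝ)..r, φ s)
    (hf : ∀ r, f r = ∫ s in (0:ℝ)..(min r R₂), φ s * g s) {r : ℝ} (hr : 0 ≤ r) (hrR : r ≤ R₂) :
    f r ≤ Φ r := by
  rw [hf, hΦ, min_eq_left hrR]
  exact integral_mono_on hr ((hφ_cont.mul hg_cont).intervalIntegrable_zero_of_Ici hr)
    (hφ_cont.intervalIntegrable_zero_of_Ici hr) fun s hs =>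
    mul_le_of_le_one_right (hφ_pos s).le (hg_le hs.1)

end Profile

theorem stmt_5_general (σ α M R₁ R₂ ξ β : ℝ) (κ h φ Φ g f : ℝ → ℝ)
    (hσ : 0 < σ)
    (hR₁ : 0 < R₁) (hR₁₂ : R₁ ≤ R₂)
    (hκ_cont : ContinuousOn κ (Set.Ioi (0 : ℝ)))
    (hκ_int : IntervalIntegrable (fun s => s * κ s) volume 0 1)
    (hh : ∀ r, h r = (σ ^ 2)⁻¹ * ((1 / 2) * (∫ s in (0:ℝ)..r, s * κ s) + α * M * r))
    (hφ : ∀ r, φ r = Real.exp (-h r))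
    (hΦ : ∀ r, Φ r = ∫ s in (0:ℝ)..r, φ s)
    (hξ : ξ = (∫ s in (0:ℝ)..R₁, (φ s)⁻¹)⁻¹)
    (hβ : β = (∫ s in (0:ℝ)..R₂, Φ s / φ s)⁻¹)
    (hg : ∀ r, g r = 1 - (ξ / 4) * (∫ s in (0:ℝ)..(min r R₁), (φ s)⁻¹)
      - (β / 4) * (∫ s in (0:ℝ)..(min r R₂), Φ s / φ s))
    (hf : ∀ r, f r = ∫ s in (0:ℝ)..(min r R₂), φ s * g s) :
    ∀ r : ℝ, 0 < r → r ≠ R₁ → r ≠ R₂ →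
      DifferentiableAt ℝ f r ∧
      DifferentiableAt ℝ (deriv f) r ∧
      deriv f r * κ r * r + 2 * σ ^ 2 * deriv (deriv f) r ≤
        -(2 * α * M * deriv f r)
          - (ξ * σ ^ 2 / 2) * (if r < R₁ then (1:ℝ) else 0)
          - (β * σ ^ 2 / 2) * f r * (if r < R₂ then (1:ℝ) else 0) := by
  intro r hr hr₁ hr₂
  have hR₂ : 0 < R₂ := hR₁.trans_le hR₁₂
  have hφ_pos : ∀ s, 0 < φ s := fun s => (hφ s).symm ▸ Real.exp_pos _
  have hφ_cont := continuousOn_φ hκ_cont hκ_int hh hφ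
  have hξ0 : 0 ≤ ξ := hξ ▸ inv_nonneg.2 (integral_nonneg hR₁.le fun s _ =>
    (inv_pos.2 (hφ_pos s)).le)
  have hβ0 : 0 ≤ β := hβ ▸ inv_nonneg.2 (integral_nonneg hR₂.le fun s hs =>
    div_nonneg (Φ_nonneg hφ_pos hΦ hs.1) (hφ_pos s).le)
  have hg_cont := continuousOn_g hφ_pos hφ_cont hΦ hR₁.le hR₂.le hg
  have hf' : ∀ t, 0 < t → t ≠ R₂ → HasDerivAt f (if t < R₂ then φ t * g t else 0) t :=
    fun t ht htR => (hasDerivAt_primitive_min (hφ_cont.mul hg_cont) ht htR).congr_of_eventuallyEq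
      (.of_forall hf)
  have hf'' := ((hasDerivAt_φ hκ_cont hκ_int hh hφ hr).mul
    (hasDerivAt_g hφ_pos hφ_cont hΦ hg hr hr₁ hr₂)).ite_lt hr₂ |>.congr_of_eventuallyEq <| by
      filter_upwards [Ioi_mem_nhds hr, isOpen_ne.mem_nhds hr₂] with t ht ht₂
      exact (hf' t ht ht₂).deriv
  refine ⟨(hf' r hr hr₂).differentiableAt, hf''.differentiableAt, ?_⟩
  rw [(hf' r hr hr₂).deriv, hf''.deriv]
  have hfΦ := f_le_Φ hφ_pos hφ_cont hg_cont (g_le_one hφ_pos hΦ hξ0 hβ0 hR₁.le hR₂.le hg) hΦ hf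
    hr.le
  split_ifs with h₂ h₁ h₁
  · field_simp [(hφ_pos r).ne', hσ.ne']
    nlinarith [mul_nonneg hβ0 (sub_nonneg.2 (hfΦ h₂.le))]
  · field_simp [(hφ_pos r).ne', hσ.ne']
    nlinarith [mul_nonneg hβ0 (sub_nonneg.2 (hfΦ h₂.le))]
  · exact absurd (h₁.trans_le hR₁₂) h₂
  · simp

/-- For every `r ∈ (0,∞)` with `r ∉ {R₁, R₂}`, the first and
second derivatives of `f` exist at `r` and satisfy the differential
inequality
`f'(r) κ(r) r + 2σ² f''(r) ≤ −2αM f'(r) − (ξσ²/2)·𝟙(r<R₁) − (βσ²/2) f(r)·𝟙(r<R₂)`. -/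
theorem stmt_5 (σ α M R₁ R₂ ξ β : ℝ) (κ h φ Φ g f : ℝ → ℝ)
    (hσ : 0 < σ) (hα : 0 ≤ α) (hM : 0 < M)
    (hR₁ : 0 < R₁) (hR₁₂ : R₁ ≤ R₂)
    (hκ_cont : ContinuousOn κ (Set.Ioi (0 : ℝ)))
    (hκ_nonneg : ∀ r : ℝ, 0 < r → 0 ≤ κ r)
    (hκ_int : IntervalIntegrable (fun s => s * κ s) volume 0 1)
    (hh : ∀ r, h r = (σ ^ 2)⁻¹ * ((1 / 2) * (∫ s in (0:ℝ)..r, s * κ s) + α * M * r))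
    (hφ : ∀ r, φ r = Real.exp (-h r))
    (hΦ : ∀ r, Φ r = ∫ s in (0:ℝ)..r, φ s)
    (hξ : ξ = (∫ s in (0:ℝ)..R₁, (φ s)⁻¹)⁻¹)
    (hβ : β = (∫ s in (0:ℝ)..R₂, Φ s / φ s)⁻¹)
    (hg : ∀ r, g r = 1 - (ξ / 4) * (∫ s in (0:ℝ)..(min r R₁), (φ s)⁻¹)
      - (β / 4) * (∫ s in (0:ℝ)..(min r R₂), Φ s / φ s))
    (hf : ∀ r, f r = ∫ s in (0:ℝ)..(min r R₂), φ s * g s) :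
    ∀ r : ℝ, 0 < r → r ≠ R₁ → r ≠ R₂ →
      DifferentiableAt ℝ f r ∧
      DifferentiableAt ℝ (deriv f) r ∧
      deriv f r * κ r * r + 2 * σ ^ 2 * deriv (deriv f) r ≤
        -(2 * α * M * deriv f r)
          - (ξ * σ ^ 2 / 2) * (if r < R₁ then (1:ℝ) else 0)
          - (β * σ ^ 2 / 2) * f r * (if r < R₂ then (1:ℝ) else 0) :=
  stmt_5_general σ α M R₁ R₂ ξ β κ h φ Φ g f hσ hR₁ hR₁₂ hκ_cont hκ_int hh hφ hΦ hξ hβ hg hf
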